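/- arXiv:2412.08558 — 7 statements merged into one kernel-verified Lean document; each statement's English description precedes it below -/
import Mathlib

section
/- Let K be a field, λ₁, λ₂ ∈ K^×, A = [[λ₁, λ₁],[0, λ₂]], B = [[λ₂, 0],[−λ₂, λ₁]]. The pair (A,B) has a common invariant 1-dimensional subspace of K² if and only if λ₁² − λ₁λ₂ + λ₂² = 0. In particular, the associated B₃ representation is irreducible iff λ₁² − λ₁λ₂ + λ₂² ≠ 0. -/
/-!
A line invariant under `A` and `B` is spanned by a common eigenvector `v`. Since `A` is upper and
`B` lower triangular with `λ₁ ≠ 0 ≠ λ₂`, both coordinates of `v` are nonzero, which forces both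
eigenvalues to be `λ₂`; then `v` lies in the kernel of `!![λ₁ - λ₂, λ₁; -λ₂, λ₁ - λ₂]`, whose
determinant is `λ₁² - λ₁λ₂ + λ₂²`. Conversely, when it vanishes, `(λ₁, λ₂ - λ₁)` is a common
eigenvector. In `K²` the invariant subspaces other than `⊥` and `⊤` are exactly the invariant lines.
-/

open Module Submodule Matrix

section InvariantLines

variable {K V : Type*} [Field K] [AddCommGroup V] [Module K V]

theorem Submodule.map_span_singleton_le_iff (f : V →ₗ[K] V) (v : V) :
    (K ∙ v).map f ≤ K ∙ v ↔ ∃ a : K, f v = a • v := by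
  simp only [map_span_le, Set.mem_singleton_iff, forall_eq', mem_span_singleton, eq_comm]

theorem exists_invariant_line_iff_exists_common_eigenvector (f g : V →ₗ[K] V) :
    (∃ W : Submodule K V, finrank K W = 1 ∧ W.map f ≤ W ∧ W.map g ≤ W) ↔
      ∃ v ≠ 0, (∃ a : K, f v = a • v) ∧ ∃ b : K, g v = b • v := by
  constructor
  · rintro ⟨W, hW, hfW, hgW⟩
    have hW_ne_bot : W ≠ ⊥ := by
      rintro rfl
      simp at hW
    obtain ⟨v, hvW, hv⟩ := exists_mem_ne_zero_of_ne_bot hW_ne_bot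
    rw [eq_span_singleton_of_mem_of_finrank_eq_one hW hvW hv,
      map_span_singleton_le_iff] at hfW hgW
    exact ⟨v, hv, hfW, hgW⟩
  · rintro ⟨v, hv, hfv, hgv⟩
    exact ⟨K ∙ v, finrank_span_singleton hv, (map_span_singleton_le_iff f v).2 hfv,
      (map_span_singleton_le_iff g v).2 hgv⟩

theorem Submodule.eq_bot_or_eq_top_iff_finrank_ne_one [FiniteDimensional K V]
    (hV : finrank K V = 2) (W : Submodule K V) :
    W = ⊥ ∨ W = ⊤ ↔ finrank K W ≠ 1 := by
  rw [← finrank_eq_zero]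
  have hW_le := hV ▸ W.finrank_le
  constructor
  · rintro (hW | rfl)
    · omega
    · rw [finrank_top]
      omega
  · intro hW
    by_cases hW_zero : finrank K W = 0
    · exact .inl hW_zero
    · exact .inr (eq_top_of_finrank_eq (by omega))

end InvariantLines

section TwoByTwo

variable {K : Type*} [Field K]

theorem sq_sub_mul_add_sq_eq_zero_of_common_eigenvector {lam1 lam2 a b : K} {v : Fin 2 → K}
    (h1 : lam1 ≠ 0) (h2 : lam2 ≠ 0) (hv : v ≠ 0)
    (hA : !![lam1, lam1; 0, lam2] *ᵥ v = a • v) (hB : !![lam2, 0; -lam2, lam1] *ᵥ v = b • v) :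
    lam1 ^ 2 - lam1 * lam2 + lam2 ^ 2 = 0 := by
  rw [mulVec_fin_two] at hA hB
  have hA0 : lam1 * v 0 + lam1 * v 1 = a * v 0 := by simpa using congrFun hA 0
  have hA1 : lam2 = a ∨ v 1 = 0 := by simpa using congrFun hA 1
  have hB0 : lam2 = b ∨ v 0 = 0 := by simpa using congrFun hB 0
  have hB1 : -lam2 * v 0 + lam1 * v 1 = b * v 1 := by simpa using congrFun hB 1
  have hx : v 0 ≠ 0 := fun hx ↦
    hv <| funext <| Fin.forall_fin_two.2 ⟨hx, by simpa [hx, h1] using hA0⟩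
  have hy : v 1 ≠ 0 := fun hy ↦ hx (by simpa [hy, h2] using hB1)
  obtain rfl := hA1.resolve_right hy
  obtain rfl := hB0.resolve_right hx
  have hdet_mul : (lam1 ^ 2 - lam1 * lam2 + lam2 ^ 2) * v 0 = 0 := by
    linear_combination (lam1 - lam2) * hA0 - lam1 * hB1
  exact (mul_eq_zero.1 hdet_mul).resolve_right hx

theorem exists_common_eigenvector_iff {lam1 lam2 : K} (h1 : lam1 ≠ 0) (h2 : lam2 ≠ 0) :
    (∃ v : Fin 2 → K, v ≠ 0 ∧ (∃ a : K, !![lam1, lam1; 0, lam2] *ᵥ v = a • v) ∧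
        ∃ b : K, !![lam2, 0; -lam2, lam1] *ᵥ v = b • v) ↔
      lam1 ^ 2 - lam1 * lam2 + lam2 ^ 2 = 0 := by
  refine ⟨fun ⟨v, hv, ⟨a, hA⟩, b, hB⟩ ↦
    sq_sub_mul_add_sq_eq_zero_of_common_eigenvector h1 h2 hv hA hB, fun h ↦ ?_⟩
  have hA : !![lam1, lam1; 0, lam2] *ᵥ ![lam1, lam2 - lam1] = lam2 • ![lam1, lam2 - lam1] := by
    ext i
    fin_cases i <;> simp <;> ring
  have hB : !![lam2, 0; -lam2, lam1] *ᵥ ![lam1, lam2 - lam1] = lam2 • ![lam1, lam2 - lam1] := by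
    ext i
    fin_cases i
    · simp [mul_comm]
    · simp
      linear_combination -h
  exact ⟨![lam1, lam2 - lam1], fun h0 ↦ h1 (congrFun h0 0), ⟨lam2, hA⟩, lam2, hB⟩

end TwoByTwo

theorem dim2_common_invariant_line_iff_general (K : Type*) [Field K]
    (lam1 lam2 : K) (h1 : lam1 ≠ 0) (h2 : lam2 ≠ 0)
    (A B : Matrix (Fin 2) (Fin 2) K)
    (hA : A = !![lam1, lam1; 0, lam2]) (hB : B = !![lam2, 0; -lam2, lam1]) :
    ((∃ W : Submodule K (Fin 2 → K), Module.finrank K W = 1 ∧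
        W.map A.mulVecLin ≤ W ∧ W.map B.mulVecLin ≤ W) ↔
      lam1 ^ 2 - lam1 * lam2 + lam2 ^ 2 = 0) ∧
    ((∀ W : Submodule K (Fin 2 → K),
        W.map A.mulVecLin ≤ W → W.map B.mulVecLin ≤ W → W = ⊥ ∨ W = ⊤) ↔
      lam1 ^ 2 - lam1 * lam2 + lam2 ^ 2 ≠ 0) := by
  subst hA hB
  have hline := (exists_invariant_line_iff_exists_common_eigenvector
    !![lam1, lam1; 0, lam2].mulVecLin !![lam2, 0; -lam2, lam1].mulVecLin).trans
    (exists_common_eigenvector_iff h1 h2)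
  refine ⟨hline, ?_⟩
  simp only [eq_bot_or_eq_top_iff_finrank_ne_one (finrank_fin_fun K), Ne, ← hline, not_exists,
    not_and]
  exact forall_congr' fun W ↦ by tauto

theorem dim2_common_invariant_line_iff (K : Type*) [Field K] [IsAlgClosed K] [CharZero K]
    (lam1 lam2 : K) (h1 : lam1 ≠ 0) (h2 : lam2 ≠ 0)
    (A B : Matrix (Fin 2) (Fin 2) K)
    (hA : A = !![lam1, lam1; 0, lam2]) (hB : B = !![lam2, 0; -lam2, lam1]) :
    ((∃ W : Submodule K (Fin 2 → K), Module.finrank K W = 1 ∧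
        W.map A.mulVecLin ≤ W ∧ W.map B.mulVecLin ≤ W) ↔
      lam1 ^ 2 - lam1 * lam2 + lam2 ^ 2 = 0) ∧
    ((∀ W : Submodule K (Fin 2 → K),
        W.map A.mulVecLin ≤ W → W.map B.mulVecLin ≤ W → W = ⊥ ∨ W = ⊤) ↔
      lam1 ^ 2 - lam1 * lam2 + lam2 ^ 2 ≠ 0) :=
  dim2_common_invariant_line_iff_general K lam1 lam2 h1 h2 A B hA hB
end

section
/- Let K be algebraically closed of characteristic 0, λ₁, λ₂ ∈ K^× distinct with λ₂² − λ₁λ₂ + λ₁² = 0 (equivalently λ₂ = λ₁e^{±πi/3} over ℂ). Set A = diag(λ₁, λ₂) and B = [[λ₁, 1],[0, λ₂]]. Then ABA = BAB, the representation of B₃ defined by ρ(σ₁)=A, ρ(σ₂)=B is reducible (span{e₁} is invariant), and it is indecomposable: K² cannot be written as a direct sum of two nonzero subspaces each invariant under both A and B. -/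
theorem dim2_strictly_indecomposable_case1 (K : Type*) [Field K] [IsAlgClosed K] [CharZero K]
    (lam1 lam2 : K) (h1 : lam1 ≠ 0) (h2 : lam2 ≠ 0) (hne : lam1 ≠ lam2)
    (hrel : lam2 ^ 2 - lam1 * lam2 + lam1 ^ 2 = 0)
    (A B : Matrix (Fin 2) (Fin 2) K)
    (hA : A = !![lam1, 0; 0, lam2]) (hB : B = !![lam1, 1; 0, lam2]) :
    A * B * A = B * A * B ∧
    (let W : Submodule K (Fin 2 → K) := Submodule.span K {Pi.single 0 1};
      W ≠ ⊥ ∧ W ≠ ⊤ ∧ W.map A.mulVecLin ≤ W ∧ W.map B.mulVecLin ≤ W) ∧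
    ¬ ∃ W₁ W₂ : Submodule K (Fin 2 → K), W₁ ≠ ⊥ ∧ W₂ ≠ ⊥ ∧ IsCompl W₁ W₂ ∧
        W₁.map A.mulVecLin ≤ W₁ ∧ W₁.map B.mulVecLin ≤ W₁ ∧
        W₂.map A.mulVecLin ≤ W₂ ∧ W₂.map B.mulVecLin ≤ W₂ := by
  subst hA hB
  have e1ne : (Pi.single 0 1 : Fin 2 → K) ≠ 0 := by
    intro h
    have := congrFun h 0
    simp at this
  -- key: any nonzero invariant submodule contains e₁
  have key : ∀ W : Submodule K (Fin 2 → K), W ≠ ⊥ →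
      W.map (!![lam1, 0; 0, lam2] : Matrix (Fin 2) (Fin 2) K).mulVecLin ≤ W →
      W.map (!![lam1, 1; 0, lam2] : Matrix (Fin 2) (Fin 2) K).mulVecLin ≤ W →
      (Pi.single 0 1 : Fin 2 → K) ∈ W := by
    intro W hW hAW hBW
    obtain ⟨v, hv, hv0⟩ := Submodule.exists_mem_ne_zero_of_ne_bot hW
    have hAv : (!![lam1, 0; 0, lam2] : Matrix (Fin 2) (Fin 2) K).mulVecLin v ∈ W :=
      hAW ⟨v, hv, rfl⟩
    have hBv : (!![lam1, 1; 0, lam2] : Matrix (Fin 2) (Fin 2) K).mulVecLin v ∈ W :=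
      hBW ⟨v, hv, rfl⟩
    have hdiff : (v 1) • (Pi.single 0 1 : Fin 2 → K) ∈ W := by
      have := W.sub_mem hBv hAv
      convert this using 1
      funext i
      fin_cases i <;>
        simp [Matrix.mulVecLin, Matrix.mulVec, dotProduct, Fin.sum_univ_two] <;> ring
    by_cases hb : v 1 = 0
    · have hva : v 0 ≠ 0 := by
        intro ha
        apply hv0
        funext i
        fin_cases i <;> simp [ha, hb]
      have : (Pi.single 0 1 : Fin 2 → K) = (v 0)⁻¹ • v := by
        funext i
        fin_cases i <;> simp [Pi.single, Function.update, hb, inv_mul_cancel₀ hva]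
      rw [this]
      exact W.smul_mem _ hv
    · have : (Pi.single 0 1 : Fin 2 → K) = (v 1)⁻¹ • ((v 1) • (Pi.single 0 1 : Fin 2 → K)) := by
        rw [smul_smul, inv_mul_cancel₀ hb, one_smul]
      rw [this]
      exact W.smul_mem _ hdiff
  refine ⟨?_, ⟨?_, ?_, ?_, ?_⟩, ?_⟩
  · ext i j
    fin_cases i <;> fin_cases j <;>
      simp [Matrix.mul_apply, Fin.sum_univ_two] <;> (first | ring1 | linear_combination (-1:K)*hrel)
  · intro h
    exact e1ne (Submodule.span_singleton_eq_bot.mp h)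
  · intro h
    have : (Pi.single 1 1 : Fin 2 → K) ∈ Submodule.span K {(Pi.single 0 1 : Fin 2 → K)} := by
      rw [h]; trivial
    rw [Submodule.mem_span_singleton] at this
    obtain ⟨c, hc⟩ := this
    have := congrFun hc 1
    simp at this
  · rw [Submodule.map_span, Submodule.span_le]
    rintro x ⟨y, hy, rfl⟩
    simp only [Set.mem_singleton_iff] at hy
    subst hy
    have : (!![lam1, 0; 0, lam2] : Matrix (Fin 2) (Fin 2) K).mulVecLin (Pi.single 0 1)
        = lam1 • (Pi.single 0 1 : Fin 2 → K) := by
      funext i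
      fin_cases i <;>
        simp [Matrix.mulVecLin, Matrix.mulVec, dotProduct, Fin.sum_univ_two]
    rw [this]
    exact Submodule.smul_mem _ _ (Submodule.mem_span_singleton_self _)
  · rw [Submodule.map_span, Submodule.span_le]
    rintro x ⟨y, hy, rfl⟩
    simp only [Set.mem_singleton_iff] at hy
    subst hy
    have : (!![lam1, 1; 0, lam2] : Matrix (Fin 2) (Fin 2) K).mulVecLin (Pi.single 0 1)
        = lam1 • (Pi.single 0 1 : Fin 2 → K) := by
      funext i
      fin_cases i <;>
        simp [Matrix.mulVecLin, Matrix.mulVec, dotProduct, Fin.sum_univ_two]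
    rw [this]
    exact Submodule.smul_mem _ _ (Submodule.mem_span_singleton_self _)
  · rintro ⟨W₁, W₂, hW₁, hW₂, hcompl, hA1, hB1, hA2, hB2⟩
    have m1 := key W₁ hW₁ hA1 hB1
    have m2 := key W₂ hW₂ hA2 hB2
    have : (Pi.single 0 1 : Fin 2 → K) = 0 :=
      (Submodule.mem_bot K).mp (hcompl.disjoint.le_bot ⟨m1, m2⟩)
    exact e1ne this
end

section
/- Let K be algebraically closed of characteristic 0. Suppose ρ is a 2-dimensional strictly indecomposable representation of B₃ over K, with A = ρ(σ₁), B = ρ(σ₂). Then either (i) A is diagonalizable with two distinct eigenvalues λ₁, λ₂ satisfying λ₁² − λ₁λ₂ + λ₂² = 0 and ρ is equivalent to the representation A = diag(λ₁,λ₂), B = [[λ₁,1],[0,λ₂]], or (ii) A is a single Jordan block and ρ is equivalent to A = B = [[λ,1],[0,λ]] for some λ ∈ K^×. -/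
/-!
A common invariant line is spanned by a common eigenvector; putting it first in a basis makes
both matrices upper triangular, `!![a, x; 0, d]` and `!![b, y; 0, e]`. The diagonal of the braid
relation forces `b = a` and `e = d` (the matrices are invertible), and its corner entry reads
`(x - y) * (a ^ 2 - a * d + d ^ 2) = 0`. If `x = y` then `A = B`, and indecomposability rules out
a diagonalizable `A`, leaving a Jordan block. Otherwise `a ^ 2 - a * d + d ^ 2 = 0`, so `a ≠ d`,
`A` is diagonalizable, and an upper triangular change of basis diagonalizes `A` while
normalizing the corner of `B` to `1`.
-/

open Matrix Submodule Module

section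

variable {K : Type*} [Field K]

section General

variable {n : Type*} [Fintype n]

def IsDecomposablePair (A B : Matrix n n K) : Prop :=
  ∃ W₁ W₂ : Submodule K (n → K), W₁ ≠ ⊥ ∧ W₂ ≠ ⊥ ∧ IsCompl W₁ W₂ ∧
    W₁.map A.mulVecLin ≤ W₁ ∧ W₁.map B.mulVecLin ≤ W₁ ∧
    W₂.map A.mulVecLin ≤ W₂ ∧ W₂.map B.mulVecLin ≤ W₂

lemma map_mulVecLin_span_singleton_le_iff {X : Matrix n n K} {v : n → K} :
    (span K {v}).map X.mulVecLin ≤ span K {v} ↔ ∃ c : K, X *ᵥ v = c • v := by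
  simp only [map_span, Set.image_singleton, span_le, Set.singleton_subset_iff,
    SetLike.mem_coe, mem_span_singleton, mulVecLin_apply, eq_comm]

variable [DecidableEq n]

def SimultaneousConj (A B S T : Matrix n n K) : Prop :=
  ∃ M : Matrix n n K, IsUnit M ∧ M⁻¹ * A * M = S ∧ M⁻¹ * B * M = T

variable {A B S T M X : Matrix n n K}

lemma conj_eq_of_mul_eq (hM : IsUnit M) (h : X * M = M * S) : M⁻¹ * X * M = S := by
  rw [Matrix.mul_assoc, h, ← Matrix.mul_assoc, nonsing_inv_mul _ ((isUnit_iff_isUnit_det M).1 hM),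
    Matrix.one_mul]

lemma SimultaneousConj.of_mul_eq (hM : IsUnit M) (hA : A * M = M * S) (hB : B * M = M * T) :
    SimultaneousConj A B S T :=
  ⟨M, hM, conj_eq_of_mul_eq hM hA, conj_eq_of_mul_eq hM hB⟩

lemma SimultaneousConj.trans {A' B' : Matrix n n K} (h : SimultaneousConj A B A' B')
    (h' : SimultaneousConj A' B' S T) : SimultaneousConj A B S T := by
  obtain ⟨M, hM, rfl, rfl⟩ := h
  obtain ⟨N, hN, rfl, rfl⟩ := h'
  refine ⟨M * N, hM.mul hN, ?_, ?_⟩ <;> simp only [Matrix.mul_inv_rev, Matrix.mul_assoc]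

lemma SimultaneousConj.isUnit_left (h : SimultaneousConj A B S T) (hA : IsUnit A) : IsUnit S := by
  obtain ⟨M, hM, rfl, -⟩ := h
  exact ((isUnit_nonsing_inv_iff.2 hM).mul hA).mul hM

lemma SimultaneousConj.isUnit_right (h : SimultaneousConj A B S T) (hB : IsUnit B) : IsUnit T := by
  obtain ⟨M, hM, -, rfl⟩ := h
  exact ((isUnit_nonsing_inv_iff.2 hM).mul hB).mul hM

lemma SimultaneousConj.braid (h : SimultaneousConj A B S T)
    (hAB : A * B * A = B * A * B) : S * T * S = T * S * T := by
  obtain ⟨M, ⟨u, rfl⟩, rfl, rfl⟩ := h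
  simp only [← coe_units_inv, Matrix.mul_assoc, Units.mul_inv_cancel_left]
  simp only [← Matrix.mul_assoc, hAB]

lemma map_mulVecLin_map_le_of_conj (hM : IsUnit M) {W : Submodule K (n → K)}
    (hW : W.map (M⁻¹ * X * M).mulVecLin ≤ W) :
    (W.map M.mulVecLin).map X.mulVecLin ≤ W.map M.mulVecLin := by
  have hXM : X * M = M * (M⁻¹ * X * M) := by
    rw [Matrix.mul_assoc M⁻¹, mul_nonsing_inv_cancel_left _ _ ((isUnit_iff_isUnit_det M).1 hM)]
  rw [← map_comp, ← mulVecLin_mul, hXM, mulVecLin_mul, map_comp]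
  exact map_mono hW

lemma IsDecomposablePair.of_simultaneousConj (h : SimultaneousConj A B S T)
    (hST : IsDecomposablePair S T) : IsDecomposablePair A B := by
  obtain ⟨M, hM, rfl, rfl⟩ := h
  obtain ⟨W₁, W₂, h₁, h₂, hc, hA₁, hB₁, hA₂, hB₂⟩ := hST
  let e : (n → K) ≃ₗ[K] (n → K) := M.toLinearEquiv' hM.invertible
  have he (W : Submodule K (n → K)) : W.map (e : (n → K) →ₗ[K] (n → K)) = W.map M.mulVecLin :=
    rfl
  refine ⟨W₁.map M.mulVecLin, W₂.map M.mulVecLin, ?_, ?_, ?_,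
    map_mulVecLin_map_le_of_conj hM hA₁, map_mulVecLin_map_le_of_conj hM hB₁,
    map_mulVecLin_map_le_of_conj hM hA₂, map_mulVecLin_map_le_of_conj hM hB₂⟩
  · simpa [← he] using h₁
  · simpa [← he] using h₂
  · simpa only [orderIsoMapComap_apply, he] using (orderIsoMapComap e).isCompl hc

lemma conj_apply_eq_zero_of_mulVec_eq_smul (hM : IsUnit M) {i j : n}
    {v : n → K} {c : K} (hMv : M *ᵥ Pi.single i 1 = v) (hX : X *ᵥ v = c • v) (hji : j ≠ i) :
    (M⁻¹ * X * M) j i = 0 := by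
  have : (M⁻¹ * X * M) *ᵥ Pi.single i 1 = c • Pi.single i 1 := by
    rw [← mulVec_mulVec, hMv, ← mulVec_mulVec, hX, mulVec_smul, ← hMv, mulVec_mulVec,
      nonsing_inv_mul _ ((isUnit_iff_isUnit_det M).1 hM), one_mulVec]
  simpa [mulVec_single_one, hji] using congrFun this j

end General

lemma Submodule.exists_eq_span_singleton_of_finrank_eq_two {V : Type*} [AddCommGroup V]
    [Module K V] (hV : finrank K V = 2) {W : Submodule K V} (hbot : W ≠ ⊥) (htop : W ≠ ⊤) :
    ∃ v ≠ 0, W = span K {v} := by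
  have : FiniteDimensional K V := .of_finrank_eq_succ hV
  obtain ⟨v, hvW, hv⟩ := W.ne_bot_iff.1 hbot
  refine ⟨v, hv, (eq_of_le_of_finrank_le (span_singleton_le_iff_mem _ _ |>.2 hvW) ?_).symm⟩
  have := Submodule.finrank_lt htop
  rw [finrank_span_singleton hv]
  omega

lemma exists_isUnit_mulVec_single_eq {v : Fin 2 → K} (hv : v ≠ 0) :
    ∃ M : Matrix (Fin 2) (Fin 2) K, IsUnit M ∧ M *ᵥ Pi.single 0 1 = v := by
  by_cases hv₀ : v 0 = 0
  · have hv₁ : v 1 ≠ 0 := fun hv₁ => hv (by ext i; fin_cases i <;> assumption)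
    refine ⟨!![0, 1; v 1, 0], ?_, ?_⟩
    · simpa [isUnit_iff_isUnit_det, det_fin_two_of] using hv₁
    · ext i; fin_cases i <;> simp [hv₀]
  · refine ⟨!![v 0, 0; v 1, 1], ?_, ?_⟩
    · simpa [isUnit_iff_isUnit_det, det_fin_two_of] using hv₀
    · ext i; fin_cases i <;> simp

lemma exists_simultaneousConj_upperTriangular {A B : Matrix (Fin 2) (Fin 2) K}
    (h : ∃ W : Submodule K (Fin 2 → K), W ≠ ⊥ ∧ W ≠ ⊤ ∧
      W.map A.mulVecLin ≤ W ∧ W.map B.mulVecLin ≤ W) :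
    ∃ a x d b y e : K, SimultaneousConj A B !![a, x; 0, d] !![b, y; 0, e] := by
  obtain ⟨W, hbot, htop, hAW, hBW⟩ := h
  obtain ⟨v, hv, rfl⟩ := exists_eq_span_singleton_of_finrank_eq_two (by simp) hbot htop
  obtain ⟨α, hα⟩ := map_mulVecLin_span_singleton_le_iff.1 hAW
  obtain ⟨β, hβ⟩ := map_mulVecLin_span_singleton_le_iff.1 hBW
  obtain ⟨M, hM, hMv⟩ := exists_isUnit_mulVec_single_eq hv
  have upper : ∀ X : Matrix (Fin 2) (Fin 2) K, X 1 0 = 0 → X = !![X 0 0, X 0 1; 0, X 1 1] :=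
    fun X hX => by simpa [hX] using eta_fin_two X
  exact ⟨_, _, _, _, _, _, M, hM,
    upper _ (conj_apply_eq_zero_of_mulVec_eq_smul hM hMv hα one_ne_zero),
    upper _ (conj_apply_eq_zero_of_mulVec_eq_smul hM hMv hβ one_ne_zero)⟩

lemma ne_zero_of_isUnit_upperTriangular {a x d : K} (h : IsUnit !![a, x; 0, d]) :
    a ≠ 0 ∧ d ≠ 0 := by
  simpa [isUnit_iff_isUnit_det, det_fin_two_of] using h

lemma upperTriangular_braid {a x d b y e : K} (ha : a ≠ 0) (hd : d ≠ 0) (hb : b ≠ 0) (he : e ≠ 0)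
    (h : !![a, x; 0, d] * !![b, y; 0, e] * !![a, x; 0, d] =
      !![b, y; 0, e] * !![a, x; 0, d] * !![b, y; 0, e]) :
    b = a ∧ e = d ∧ (x - y) * (a ^ 2 - a * d + d ^ 2) = 0 := by
  simp only [mul_fin_two, mul_zero, zero_mul, add_zero, zero_add] at h
  have h₀₀ := congrFun (congrFun h 0) 0
  have h₀₁ := congrFun (congrFun h 0) 1
  have h₁₁ := congrFun (congrFun h 1) 1
  simp only [of_apply, cons_val', cons_val_zero, cons_val_one, empty_val',
    cons_val_fin_one] at h₀₀ h₀₁ h₁₁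
  obtain rfl : b = a := mul_left_cancel₀ (mul_ne_zero ha hb) (by linear_combination -h₀₀)
  obtain rfl : e = d := mul_left_cancel₀ (mul_ne_zero hd he) (by linear_combination -h₁₁)
  exact ⟨rfl, rfl, by linear_combination h₀₁⟩

lemma linearIndependent_pair_of_ne_zero {p q : K} (hq : q ≠ 0) :
    LinearIndependent K ![![1, 0], ![p, q]] := by
  refine (LinearIndependent.pair_iff' (by simp)).2 fun c hc => hq ?_
  simpa using (congrFun hc 1).symm

lemma isDecomposablePair_of_eigenvectors {A B : Matrix (Fin 2) (Fin 2) K} {u w : Fin 2 → K}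
    (huw : LinearIndependent K ![u, w]) (hAu : ∃ c : K, A *ᵥ u = c • u)
    (hBu : ∃ c : K, B *ᵥ u = c • u) (hAw : ∃ c : K, A *ᵥ w = c • w)
    (hBw : ∃ c : K, B *ᵥ w = c • w) : IsDecomposablePair A B := by
  have hcompl := huw.isCompl_span_image (huw.span_eq_top_of_card_eq_finrank' (by simp))
    (s := {0}) (t := {1}) (by
      rw [show ({1} : Set (Fin 2)) = {0}ᶜ by ext i; fin_cases i <;> simp]
      exact isCompl_compl)
  refine ⟨span K {u}, span K {w}, by simpa using huw.ne_zero 0, by simpa using huw.ne_zero 1,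
    by simpa using hcompl, ?_, ?_, ?_, ?_⟩ <;> rwa [map_mulVecLin_span_singleton_le_iff]

lemma isDecomposablePair_self_upperTriangular {a x d : K} (h : a ≠ d ∨ x = 0) :
    IsDecomposablePair !![a, x; 0, d] !![a, x; 0, d] := by
  have he₀ : ∃ c : K, !![a, x; 0, d] *ᵥ ![1, 0] = c • ![1, 0] :=
    ⟨a, by ext i; fin_cases i <;> simp⟩
  rcases h with had | rfl
  · have he₁ : ∃ c : K, !![a, x; 0, d] *ᵥ ![x, d - a] = c • ![x, d - a] :=
      ⟨d, by ext i; fin_cases i <;> simp <;> ring⟩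
    exact isDecomposablePair_of_eigenvectors (linearIndependent_pair_of_ne_zero
      (sub_ne_zero.2 had.symm)) he₀ he₀ he₁ he₁
  · have he₁ : ∃ c : K, !![a, 0; 0, d] *ᵥ ![0, 1] = c • ![0, 1] :=
      ⟨d, by ext i; fin_cases i <;> simp⟩
    exact isDecomposablePair_of_eigenvectors (linearIndependent_pair_of_ne_zero one_ne_zero)
      he₀ he₀ he₁ he₁

lemma simultaneousConj_jordan {a x : K} (hx : x ≠ 0) :
    SimultaneousConj !![a, x; 0, a] !![a, x; 0, a] !![a, 1; 0, a] !![a, 1; 0, a] := by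
  have hN : IsUnit !![1, 0; 0, x⁻¹] := by simpa [isUnit_iff_isUnit_det, det_fin_two_of] using hx
  have h : !![a, x; 0, a] * !![1, 0; 0, x⁻¹] = !![1, 0; 0, x⁻¹] * !![a, 1; 0, a] := by
    simp [hx, mul_comm]
  exact .of_mul_eq hN h h

lemma simultaneousConj_diagonal_upperTriangular {a x d y : K} (had : a ≠ d) (hxy : x ≠ y) :
    SimultaneousConj !![a, x; 0, d] !![a, y; 0, d] !![a, 0; 0, d] !![a, 1; 0, d] := by
  have had' : d - a ≠ 0 := sub_ne_zero.2 had.symm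
  have hxy' : y - x ≠ 0 := sub_ne_zero.2 hxy.symm
  -- The columns of `N` are eigenvectors of `A`, the second one scaled so that `B` gets corner `1`.
  let N : Matrix (Fin 2) (Fin 2) K := !![1, x / ((y - x) * (d - a)); 0, (y - x)⁻¹]
  refine .of_mul_eq (M := N) ?_ ?_ ?_
  · simpa [N, isUnit_iff_isUnit_det, det_fin_two_of] using hxy'
  · ext i j; fin_cases i <;> fin_cases j <;> simp [N, mul_comm]
    field_simp; ring
  · ext i j; fin_cases i <;> fin_cases j <;> simp [N, mul_comm]
    field_simp; ring

-- In form (i), `lam1 / lam2` is a primitive sixth root of unity.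
def IsConjToStandardForm (A B : Matrix (Fin 2) (Fin 2) K) : Prop :=
  (∃ lam1 lam2 : K, lam1 ≠ 0 ∧ lam2 ≠ 0 ∧ lam1 ≠ lam2 ∧
      lam1 ^ 2 - lam1 * lam2 + lam2 ^ 2 = 0 ∧
      SimultaneousConj A B !![lam1, 0; 0, lam2] !![lam1, 1; 0, lam2]) ∨
    ∃ lam : K, lam ≠ 0 ∧ SimultaneousConj A B !![lam, 1; 0, lam] !![lam, 1; 0, lam]

lemma IsConjToStandardForm.of_simultaneousConj {A B S T : Matrix (Fin 2) (Fin 2) K}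
    (h : SimultaneousConj A B S T) : IsConjToStandardForm S T → IsConjToStandardForm A B := by
  rintro (⟨l₁, l₂, h₁, h₂, h₁₂, hq, hST⟩ | ⟨l, hl, hST⟩)
  · exact .inl ⟨l₁, l₂, h₁, h₂, h₁₂, hq, h.trans hST⟩
  · exact .inr ⟨l, hl, h.trans hST⟩

lemma isConjToStandardForm_upperTriangular {a x d y : K} (ha : a ≠ 0) (hd : d ≠ 0)
    (hxy : (x - y) * (a ^ 2 - a * d + d ^ 2) = 0)
    (hindec : ¬ IsDecomposablePair !![a, x; 0, d] !![a, y; 0, d]) :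
    IsConjToStandardForm !![a, x; 0, d] !![a, y; 0, d] := by
  rcases eq_or_ne x y with rfl | hxy'
  · by_cases hJ : a = d ∧ x ≠ 0
    · obtain ⟨rfl, hx⟩ := hJ
      exact .inr ⟨a, ha, simultaneousConj_jordan hx⟩
    · exact absurd (isDecomposablePair_self_upperTriangular (by tauto)) hindec
  · have hq : a ^ 2 - a * d + d ^ 2 = 0 := (mul_eq_zero.1 hxy).resolve_left (sub_ne_zero.2 hxy')
    have had : a ≠ d := by
      rintro rfl
      exact ha (pow_eq_zero_iff two_ne_zero |>.1 (by linear_combination hq))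
    exact .inl ⟨a, d, ha, hd, had, hq, simultaneousConj_diagonal_upperTriangular had hxy'⟩

end

theorem dim2_strictly_indecomposable_classification_general
    (K : Type*) [Field K]
    (A B : Matrix (Fin 2) (Fin 2) K) (hA : IsUnit A) (hB : IsUnit B)
    (hbraid : A * B * A = B * A * B)
    (hred : ∃ W : Submodule K (Fin 2 → K), W ≠ ⊥ ∧ W ≠ ⊤ ∧
      W.map A.mulVecLin ≤ W ∧ W.map B.mulVecLin ≤ W)
    (hindec : ¬ ∃ W₁ W₂ : Submodule K (Fin 2 → K), W₁ ≠ ⊥ ∧ W₂ ≠ ⊥ ∧ IsCompl W₁ W₂ ∧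
      W₁.map A.mulVecLin ≤ W₁ ∧ W₁.map B.mulVecLin ≤ W₁ ∧
      W₂.map A.mulVecLin ≤ W₂ ∧ W₂.map B.mulVecLin ≤ W₂) :
    (∃ lam1 lam2 : K, lam1 ≠ 0 ∧ lam2 ≠ 0 ∧ lam1 ≠ lam2 ∧
        lam1 ^ 2 - lam1 * lam2 + lam2 ^ 2 = 0 ∧
        ∃ M : Matrix (Fin 2) (Fin 2) K, IsUnit M ∧
          M⁻¹ * A * M = !![lam1, 0; 0, lam2] ∧ M⁻¹ * B * M = !![lam1, 1; 0, lam2]) ∨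
    (∃ lam : K, lam ≠ 0 ∧
        ∃ M : Matrix (Fin 2) (Fin 2) K, IsUnit M ∧
          M⁻¹ * A * M = !![lam, 1; 0, lam] ∧ M⁻¹ * B * M = !![lam, 1; 0, lam]) := by
  obtain ⟨a, x, d, b, y, e, hconj⟩ := exists_simultaneousConj_upperTriangular hred
  obtain ⟨ha, hd⟩ := ne_zero_of_isUnit_upperTriangular (hconj.isUnit_left hA)
  obtain ⟨hb, he⟩ := ne_zero_of_isUnit_upperTriangular (hconj.isUnit_right hB)
  obtain ⟨rfl, rfl, hxy⟩ := upperTriangular_braid ha hd hb he (hconj.braid hbraid)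
  exact IsConjToStandardForm.of_simultaneousConj hconj <|
    isConjToStandardForm_upperTriangular ha hd hxy fun h => hindec (h.of_simultaneousConj hconj)

theorem dim2_strictly_indecomposable_classification
    (K : Type*) [Field K] [IsAlgClosed K] [CharZero K]
    (A B : Matrix (Fin 2) (Fin 2) K) (hA : IsUnit A) (hB : IsUnit B)
    (hbraid : A * B * A = B * A * B)
    (hred : ∃ W : Submodule K (Fin 2 → K), W ≠ ⊥ ∧ W ≠ ⊤ ∧
      W.map A.mulVecLin ≤ W ∧ W.map B.mulVecLin ≤ W)
    (hindec : ¬ ∃ W₁ W₂ : Submodule K (Fin 2 → K), W₁ ≠ ⊥ ∧ W₂ ≠ ⊥ ∧ IsCompl W₁ W₂ ∧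
      W₁.map A.mulVecLin ≤ W₁ ∧ W₁.map B.mulVecLin ≤ W₁ ∧
      W₂.map A.mulVecLin ≤ W₂ ∧ W₂.map B.mulVecLin ≤ W₂) :
    (∃ lam1 lam2 : K, lam1 ≠ 0 ∧ lam2 ≠ 0 ∧ lam1 ≠ lam2 ∧
        lam1 ^ 2 - lam1 * lam2 + lam2 ^ 2 = 0 ∧
        ∃ M : Matrix (Fin 2) (Fin 2) K, IsUnit M ∧
          M⁻¹ * A * M = !![lam1, 0; 0, lam2] ∧ M⁻¹ * B * M = !![lam1, 1; 0, lam2]) ∨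
    (∃ lam : K, lam ≠ 0 ∧
        ∃ M : Matrix (Fin 2) (Fin 2) K, IsUnit M ∧
          M⁻¹ * A * M = !![lam, 1; 0, lam] ∧ M⁻¹ * B * M = !![lam, 1; 0, lam]) :=
  dim2_strictly_indecomposable_classification_general K A B hA hB hbraid hred hindec
end

section
/- Let λ₁, λ₂, λ₃ ∈ K^× be distinct with λ₂ = λ₁e^{πi/3} and λ₃ = λ₁e^{−πi/3} (i.e., λ₁ − λ₂ − λ₃ = 0 and λ₂² + λ₂λ₃ + λ₃² = 0). Set A = diag(λ₁, λ₂, λ₃) and B = [[λ₁, 1, 1],[0, λ₂, 0],[0, 0, λ₃]]. Then ABA = BAB. -/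
theorem dim3_case_1_1_braid_relation (K : Type*) [Field K] [IsAlgClosed K] [CharZero K]
    (lam1 lam2 lam3 : K) (h1 : lam1 ≠ 0) (h2 : lam2 ≠ 0) (h3 : lam3 ≠ 0)
    (h12 : lam1 ≠ lam2) (h13 : lam1 ≠ lam3) (h23 : lam2 ≠ lam3)
    (hsum : lam1 - lam2 - lam3 = 0)
    (hrel : lam2 ^ 2 + lam2 * lam3 + lam3 ^ 2 = 0)
    (A B : Matrix (Fin 3) (Fin 3) K)
    (hA : A = !![lam1, 0, 0; 0, lam2, 0; 0, 0, lam3])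
    (hB : B = !![lam1, 1, 1; 0, lam2, 0; 0, 0, lam3]) :
    A * B * A = B * A * B := by
  have hl : lam1 = lam2 + lam3 := by linear_combination hsum
  subst hl hA hB
  ext i j
  fin_cases i <;> fin_cases j <;>
    simp [Matrix.mul_apply, Fin.sum_univ_succ] <;> ring_nf <;> linear_combination -hrel
end

section
/- Let K be algebraically closed of characteristic 0, λ₁, λ₂ ∈ K^× with λ₁² − λ₁λ₂ + λ₂² = 0, and β, β′ ∈ K with β ≠ β′. Then the B₃ representations given by A = [[λ₁,1,0],[0,λ₁,0],[0,0,λ₂]], B_β = [[λ₁, 1 + λ₁β/λ₂², 1],[0, λ₁, 0],[0, β, λ₂]] and the same A with B_{β′} are inequivalent: there is no M ∈ GL(3,K) with M⁻¹AM = A and M⁻¹B_βM = B_{β′}. -/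
theorem dim3_case_4_1_inequivalent (K : Type*) [Field K] [IsAlgClosed K] [CharZero K]
    (lam1 lam2 : K) (h1 : lam1 ≠ 0) (h2 : lam2 ≠ 0)
    (hrel : lam1 ^ 2 - lam1 * lam2 + lam2 ^ 2 = 0)
    (beta beta' : K) (hbb : beta ≠ beta')
    (A Bb Bb' : Matrix (Fin 3) (Fin 3) K)
    (hA : A = !![lam1, 1, 0; 0, lam1, 0; 0, 0, lam2])
    (hBb : Bb = !![lam1, 1 + lam1 * beta / lam2 ^ 2, 1; 0, lam1, 0; 0, beta, lam2])
    (hBb' : Bb' = !![lam1, 1 + lam1 * beta' / lam2 ^ 2, 1; 0, lam1, 0; 0, beta', lam2]) :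
    ¬ ∃ M : Matrix (Fin 3) (Fin 3) K, IsUnit M ∧
        M⁻¹ * A * M = A ∧ M⁻¹ * Bb * M = Bb' := by
  rintro ⟨M, hMu, hAM, hBM⟩
  have hne : lam1 ≠ lam2 := by
    intro h
    rw [h] at hrel
    apply h2
    have : lam2 ^ 2 = 0 := by linear_combination hrel
    exact pow_eq_zero_iff (n := 2) (by norm_num) |>.mp this
  have hd : IsUnit M.det := (Matrix.isUnit_iff_isUnit_det M).mp hMu
  have hMM : M * M⁻¹ = 1 := Matrix.mul_nonsing_inv M hd
  have hA' : A * M = M * A := by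
    calc A * M = M * (M⁻¹ * A * M) := by
          rw [← Matrix.mul_assoc, ← Matrix.mul_assoc, hMM, Matrix.one_mul]
      _ = M * A := by rw [hAM]
  have hB' : Bb * M = M * Bb' := by
    calc Bb * M = M * (M⁻¹ * Bb * M) := by
          rw [← Matrix.mul_assoc, ← Matrix.mul_assoc, hMM, Matrix.one_mul]
      _ = M * Bb' := by rw [hBM]
  subst hA hBb hBb'
  have e00 := congrFun (congrFun hA' 0) 0
  have e01 := congrFun (congrFun hA' 0) 1
  have e02 := congrFun (congrFun hA' 0) 2
  have e12 := congrFun (congrFun hA' 1) 2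
  have e20 := congrFun (congrFun hA' 2) 0
  have e21 := congrFun (congrFun hA' 2) 1
  have eb01 := congrFun (congrFun hB' 0) 1
  simp [Matrix.mul_apply, Fin.sum_univ_three, Matrix.vecHead, Matrix.vecTail] at e00 e01 e02 e12 e20 e21 eb01
  have h10 : M 1 0 = 0 := by linear_combination e00
  have h12 : M 1 2 = 0 := by
    have hsub : lam1 - lam2 ≠ 0 := sub_ne_zero.mpr hne
    have key : (lam1 - lam2) * M 1 2 = 0 := by linear_combination e12
    rcases mul_eq_zero.mp key with h | h
    · exact absurd h hsub
    · exact h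
  have h02 : M 0 2 = 0 := by
    have hsub : lam1 - lam2 ≠ 0 := sub_ne_zero.mpr hne
    have key : (lam1 - lam2) * M 0 2 = 0 := by linear_combination e02 - h12
    rcases mul_eq_zero.mp key with h | h
    · exact absurd h hsub
    · exact h
  have h20 : M 2 0 = 0 := by
    have hsub : lam2 - lam1 ≠ 0 := sub_ne_zero.mpr (Ne.symm hne)
    have key : (lam2 - lam1) * M 2 0 = 0 := by linear_combination e20
    rcases mul_eq_zero.mp key with h | h
    · exact absurd h hsub
    · exact h
  have h21 : M 2 1 = 0 := by
    have hsub : lam2 - lam1 ≠ 0 := sub_ne_zero.mpr (Ne.symm hne)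
    have key : (lam2 - lam1) * M 2 1 = 0 := by linear_combination e21 + h20
    rcases mul_eq_zero.mp key with h | h
    · exact absurd h hsub
    · exact h
  have h11 : M 1 1 = M 0 0 := by linear_combination e01
  have h00 : M 0 0 = 0 := by
    have hl2 : lam2 ^ 2 ≠ 0 := pow_ne_zero 2 h2
    have key : lam1 * (beta - beta') * M 0 0 = 0 := by
      field_simp at eb01
      linear_combination eb01 - lam2 ^ 2 * h21 + lam2 ^ 2 * beta' * h02
        - (lam2 ^ 2 + lam1 * beta) * h11
    have hne2 : lam1 * (beta - beta') ≠ 0 :=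
      mul_ne_zero h1 (sub_ne_zero.mpr hbb)
    rcases mul_eq_zero.mp key with h | h
    · exact absurd h hne2
    · exact h
  have hdet : M.det = 0 := by
    rw [Matrix.det_fin_three, h10, h12, h20, h21, h00, h02, h11, h00]
    ring
  rw [hdet] at hd
  exact hd.ne_zero rfl
end

section
/- Let K be algebraically closed of characteristic 0 and λ₂ ∈ K^×, λ₁ = −λ₂. Set A = [[λ₁,1,0],[0,λ₁,0],[0,0,λ₂]] and B = [[λ₁, −2, 0],[0, λ₂/2, 1],[0, 3λ₂²/4, −λ₂/2]]. Then ABA = BAB. -/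
theorem dim3_case_4_2_braid_relation (K : Type*) [Field K] [IsAlgClosed K] [CharZero K]
    (lam2 : K) (h2 : lam2 ≠ 0) (lam1 : K) (h1 : lam1 = -lam2)
    (A B : Matrix (Fin 3) (Fin 3) K)
    (hA : A = !![lam1, 1, 0; 0, lam1, 0; 0, 0, lam2])
    (hB : B = !![lam1, -2, 0;
                 0, lam2 / 2, 1;
                 0, 3 * lam2 ^ 2 / 4, -lam2 / 2]) :
    A * B * A = B * A * B := by
  subst h1 hA hB
  ext i j
  fin_cases i <;> fin_cases j <;>
    simp [Matrix.mul_apply, Fin.sum_univ_succ] <;> ring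
end

section
/- Let K be algebraically closed of characteristic 0 and λ₂, λ₃ ∈ K^×; set λ₁ := −λ₃²/λ₂, and assume λ₁, λ₂, λ₃ pairwise distinct and λ₂² + λ₃² ≠ 0. Set A = diag(λ₁, λ₂, λ₃) and B = [[λ₂³/(λ₂²+λ₃²), 1, 1],[λ₃²(λ₂⁴+λ₂²λ₃²+λ₃⁴)/(λ₂²+λ₃²)², −λ₃⁴/(λ₂(λ₂²+λ₃²)), −λ₃³(λ₂²+λ₂λ₃+λ₃²)/(λ₂²(λ₂²+λ₃²))],[0, 0, λ₃]]. Then ABA = BAB, and span{e₁, e₂} is a common invariant subspace of A and B. -/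
set_option maxHeartbeats 2000000

theorem dim3_W2_case1_braid_relation (K : Type*) [Field K] [IsAlgClosed K] [CharZero K]
    (lam2 lam3 : K) (h2 : lam2 ≠ 0) (h3 : lam3 ≠ 0)
    (lam1 : K) (hlam1 : lam1 = -lam3 ^ 2 / lam2)
    (h12 : lam1 ≠ lam2) (h13 : lam1 ≠ lam3) (h23 : lam2 ≠ lam3)
    (hden : lam2 ^ 2 + lam3 ^ 2 ≠ 0)
    (A B : Matrix (Fin 3) (Fin 3) K)
    (hA : A = !![lam1, 0, 0; 0, lam2, 0; 0, 0, lam3])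
    (hB : B = !![lam2 ^ 3 / (lam2 ^ 2 + lam3 ^ 2), 1, 1;
                 lam3 ^ 2 * (lam2 ^ 4 + lam2 ^ 2 * lam3 ^ 2 + lam3 ^ 4) / (lam2 ^ 2 + lam3 ^ 2) ^ 2,
                   -lam3 ^ 4 / (lam2 * (lam2 ^ 2 + lam3 ^ 2)),
                   -lam3 ^ 3 * (lam2 ^ 2 + lam2 * lam3 + lam3 ^ 2) / (lam2 ^ 2 * (lam2 ^ 2 + lam3 ^ 2));
                 0, 0, lam3]) :
    A * B * A = B * A * B ∧
    (let W : Submodule K (Fin 3 → K) :=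
        Submodule.span K {Pi.single 0 1, Pi.single 1 1};
      W.map A.mulVecLin ≤ W ∧ W.map B.mulVecLin ≤ W) := by
  constructor
  · set d : K := lam2 ^ 2 * (lam2 ^ 2 + lam3 ^ 2) ^ 2 with hd_def
    have hd : d ≠ 0 := by
      apply mul_ne_zero (pow_ne_zero _ h2) (pow_ne_zero _ hden)
    set A' : Matrix (Fin 3) (Fin 3) K :=
      !![-lam3 ^ 2, 0, 0; 0, lam2 ^ 2, 0; 0, 0, lam2 * lam3] with hA'_def
    set C : Matrix (Fin 3) (Fin 3) K :=
      !![lam2 ^ 5 * (lam2 ^ 2 + lam3 ^ 2), d, d;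
         lam3 ^ 2 * (lam2 ^ 4 + lam2 ^ 2 * lam3 ^ 2 + lam3 ^ 4) * lam2 ^ 2,
           -lam3 ^ 4 * lam2 * (lam2 ^ 2 + lam3 ^ 2),
           -lam3 ^ 3 * (lam2 ^ 2 + lam2 * lam3 + lam3 ^ 2) * (lam2 ^ 2 + lam3 ^ 2);
         0, 0, lam3 * d] with hC_def
    have hA2 : A = lam2⁻¹ • A' := by
      rw [hA]
      ext i j
      fin_cases i <;> fin_cases j <;>
        simp [hA'_def, hlam1, Matrix.vecHead, Matrix.vecTail] <;> field_simp <;> ring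
    have hB2 : B = d⁻¹ • C := by
      rw [hB]
      ext i j
      fin_cases i <;> fin_cases j <;>
        simp [hC_def, hd_def, Matrix.vecHead, Matrix.vecTail] <;>
        (try field_simp) <;> (try ring) <;> tauto
    have hkey : d • (A' * C * A') = lam2 • (C * A' * C) := by
      ext i j
      fin_cases i <;> fin_cases j <;>
        simp [hA'_def, hC_def, hd_def, Matrix.mul_apply, Fin.sum_univ_succ] <;> ring
    rw [hA2, hB2]
    simp only [Matrix.smul_mul, Matrix.mul_smul, smul_smul]
    have expand : ∀ (c1 c2 : K), c1 = c2 * d * lam2⁻¹ →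
        c1 • (A' * C * A') = c2 • (C * A' * C) := by
      intro c1 c2 hc
      rw [hc]
      calc (c2 * d * lam2⁻¹) • (A' * C * A')
          = (c2 * lam2⁻¹) • (d • (A' * C * A')) := by rw [smul_smul]; ring_nf
        _ = (c2 * lam2⁻¹) • (lam2 • (C * A' * C)) := by rw [hkey]
        _ = c2 • (C * A' * C) := by rw [smul_smul]; congr 1; field_simp
    apply expand
    field_simp
  · intro W
    have key : ∀ M : Matrix (Fin 3) (Fin 3) K,
        (M 2 0 = 0) → (M 2 1 = 0) → W.map M.mulVecLin ≤ W := by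
      intro M hM0 hM1
      rw [Submodule.map_span_le]
      rintro v (rfl | rfl)
      · have h : M.mulVecLin (Pi.single 0 1) =
            M 0 0 • (Pi.single 0 1 : Fin 3 → K) + M 1 0 • (Pi.single 1 1 : Fin 3 → K) := by
          funext i
          fin_cases i <;>
            simp [Matrix.mulVecLin_apply, Matrix.mulVec, dotProduct,
              Fin.sum_univ_succ, Pi.single_apply, hM0]
        rw [h]
        exact Submodule.add_mem _
          (Submodule.smul_mem _ _ (Submodule.subset_span (Or.inl rfl)))
          (Submodule.smul_mem _ _ (Submodule.subset_span (Or.inr rfl)))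
      · have h : M.mulVecLin (Pi.single 1 1) =
            M 0 1 • (Pi.single 0 1 : Fin 3 → K) + M 1 1 • (Pi.single 1 1 : Fin 3 → K) := by
          funext i
          fin_cases i <;>
            simp [Matrix.mulVecLin_apply, Matrix.mulVec, dotProduct,
              Fin.sum_univ_succ, Pi.single_apply, hM1]
        rw [h]
        exact Submodule.add_mem _
          (Submodule.smul_mem _ _ (Submodule.subset_span (Or.inl rfl)))
          (Submodule.smul_mem _ _ (Submodule.subset_span (Or.inr rfl)))
    refine ⟨key _ ?_ ?_, key _ ?_ ?_⟩ <;>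
      simp [hA, hB, Matrix.vecHead, Matrix.vecTail]
end
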